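/- Let H be an N_r × N_t complex matrix of rank N_r (N_t ≥ N_r) with det(H H*) = 1, and define C(P) = sup over positive semidefinite N_t × N_t matrices C_x with trace(C_x) ≤ P of log det(I + H C_x H*). Then C(P) − N_r · log(P/N_r) → 0 as P → ∞. -/

import Mathlib

open Matrix Filter ComplexOrder

/-! Write `A = H Hᴴ` and `Π = Hᴴ A⁻¹ H` for the orthogonal projection onto the row space of `H`.
Upper bound: for an admissible `Cₓ`, `det (I + H Cₓ Hᴴ) = det A · det (B (I + H Cₓ Hᴴ) B)` with
`B = A^{-1/2}`, and AM-GM on the eigenvalues of the last matrix bounds its determinant by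
`((tr A⁻¹ + P) / N_r) ^ N_r`, because `tr (A⁻¹ H Cₓ Hᴴ) = tr (Π Cₓ) ≤ tr Cₓ`.
Lower bound: the input `Cₓ = (P / N_r) Π` gives `I + H Cₓ Hᴴ = I + (P / N_r) A`, whose determinant
is at least `(P / N_r) ^ N_r det A`. When `det A = 1` the two bounds differ by at most
`N_r tr A⁻¹ / P → 0`. -/

theorem Real.prod_le_sum_div_card_pow {ι : Type*} (s : Finset ι) (z : ι → ℝ)
    (hz : ∀ i ∈ s, 0 ≤ z i) : ∏ i ∈ s, z i ≤ ((∑ i ∈ s, z i) / s.card) ^ s.card := by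
  rcases s.eq_empty_or_nonempty with rfl | hs
  · simp
  have amgm := Real.geom_mean_le_arith_mean s (fun _ ↦ 1) z (fun _ _ ↦ zero_le_one)
    (by simpa using hs) hz
  simp only [Real.rpow_one, one_mul, Finset.sum_const, nsmul_eq_mul, mul_one] at amgm
  calc ∏ i ∈ s, z i = ((∏ i ∈ s, z i) ^ ((s.card : ℝ)⁻¹)) ^ s.card :=
        (Real.rpow_inv_natCast_pow (Finset.prod_nonneg hz) hs.card_pos.ne').symm
    _ ≤ _ := by gcongr; exact Real.rpow_nonneg (Finset.prod_nonneg hz) _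

theorem Real.log_add_div_le_log_div_add {x a : ℝ} (hx : 0 < x) (ha : 0 ≤ a) (y : ℝ) :
    Real.log ((a + x) / y) ≤ Real.log (x / y) + a / x := by
  rcases eq_or_ne y 0 with rfl | hy
  · simpa using div_nonneg ha hx.le
  have h := Real.log_le_sub_one_of_pos (show 0 < (a + x) / x by positivity)
  rw [Real.log_div (by positivity) hx.ne', add_div, div_self hx.ne', add_sub_cancel_right] at h
  rw [Real.log_div (by positivity) hy, Real.log_div hx.ne' hy]
  linarith

namespace Matrix

variable {m n 𝕜 : Type*} [Fintype m] [Fintype n] [RCLike 𝕜]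

theorem IsHermitian.det_one_add [DecidableEq m] {A : Matrix m m 𝕜} (hA : A.IsHermitian) :
    (1 + A).det = ∏ i, ((1 + hA.eigenvalues i : ℝ) : 𝕜) := by
  conv_lhs => rw [hA.spectral_theorem,
    ← map_one (Unitary.conjStarAlgAut 𝕜 _ hA.eigenvectorUnitary), ← map_add,
    Unitary.conjStarAlgAut_apply, det_mul_right_comm,
    Unitary.mul_star_self_of_mem hA.eigenvectorUnitary.2, one_mul, ← diagonal_one, diagonal_add,
    det_diagonal]
  simp

theorem IsHermitian.trace_mul_nonneg_of_isIdempotentElem {Q C : Matrix m m 𝕜} (hQ : Q.IsHermitian)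
    (hQQ : IsIdempotentElem Q) (hC : C.PosSemidef) : 0 ≤ (Q * C).trace := by
  have h : (Q * C).trace = (Q * C * Qᴴ).trace := by rw [hQ.eq, trace_mul_cycle, hQQ.eq]
  exact h ▸ (hC.mul_mul_conjTranspose_same Q).trace_nonneg

namespace PosSemidef

variable [DecidableEq m]

theorem re_det_le_re_trace_div_card_pow {A : Matrix m m 𝕜} (hA : A.PosSemidef) :
    RCLike.re A.det ≤ (RCLike.re A.trace / Fintype.card m) ^ Fintype.card m := by
  rw [hA.1.det_eq_prod_eigenvalues, hA.1.trace_eq_sum_eigenvalues, ← RCLike.ofReal_prod,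
    ← RCLike.ofReal_sum, RCLike.ofReal_re, RCLike.ofReal_re]
  exact Real.prod_le_sum_div_card_pow _ _ fun i _ ↦ hA.eigenvalues_nonneg i

theorem re_det_le_re_det_one_add {A : Matrix m m 𝕜} (hA : A.PosSemidef) :
    RCLike.re A.det ≤ RCLike.re (1 + A).det := by
  rw [hA.1.det_eq_prod_eigenvalues, hA.1.det_one_add, ← RCLike.ofReal_prod, ← RCLike.ofReal_prod,
    RCLike.ofReal_re, RCLike.ofReal_re]
  exact Finset.prod_le_prod (fun i _ ↦ hA.eigenvalues_nonneg i)
    fun i _ ↦ le_add_of_nonneg_left zero_le_one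

theorem pow_mul_re_det_le_re_det_one_add_smul {A : Matrix m m 𝕜} (hA : A.PosSemidef) {q : ℝ}
    (hq : 0 ≤ q) : q ^ Fintype.card m * RCLike.re A.det ≤ RCLike.re (1 + (q : 𝕜) • A).det := by
  have h := (hA.smul (RCLike.ofReal_nonneg (K := 𝕜) |>.mpr hq)).re_det_le_re_det_one_add
  rwa [det_smul, ← RCLike.ofReal_pow, RCLike.re_ofReal_mul] at h

open scoped MatrixOrder in
theorem re_det_le_of_re_trace_inv_mul_le {A X : Matrix m m 𝕜} (hA : A.PosDef)
    (hX : X.PosSemidef) {t : ℝ} (ht : RCLike.re (A⁻¹ * X).trace ≤ t) :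
    RCLike.re X.det ≤ RCLike.re A.det * (t / Fintype.card m) ^ Fintype.card m := by
  set B := CFC.sqrt A⁻¹
  have hBB : B * B = A⁻¹ := CFC.sqrt_mul_sqrt_self _ hA.inv.posSemidef.nonneg
  have hBH : Bᴴ = B := (CFC.sqrt_nonneg _).posSemidef.1.eq
  have hY : (B * X * B).PosSemidef := by simpa [hBH] using hX.mul_mul_conjTranspose_same B
  have htrace : (B * X * B).trace = (A⁻¹ * X).trace := by rw [trace_mul_cycle, ← hBB]
  have hdet : X.det = A.det * (B * X * B).det := by
    have h := det_nonsing_inv_mul_det _ ((isUnit_iff_isUnit_det A).mp hA.isUnit)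
    rw [det_mul, det_mul, mul_right_comm, ← det_mul, hBB]
    linear_combination -X.det * h
  obtain ⟨hA_re, hA_im⟩ := RCLike.pos_iff.mp hA.det_pos
  rw [hdet, RCLike.mul_re, hA_im, zero_mul, sub_zero]
  have htr_nonneg : 0 ≤ RCLike.re (A⁻¹ * X).trace :=
    htrace ▸ (RCLike.nonneg_iff.mp hY.trace_nonneg).1
  gcongr
  calc RCLike.re (B * X * B).det
      ≤ (RCLike.re (A⁻¹ * X).trace / Fintype.card m) ^ Fintype.card m :=
        htrace ▸ hY.re_det_le_re_trace_div_card_pow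
    _ ≤ _ := by gcongr

end PosSemidef

section rowSpaceProj

variable [DecidableEq m] (H : Matrix m n 𝕜)

noncomputable def rowSpaceProj : Matrix n n 𝕜 := Hᴴ * (H * Hᴴ)⁻¹ * H

theorem posSemidef_rowSpaceProj : (rowSpaceProj H).PosSemidef :=
  (posSemidef_self_mul_conjTranspose H).inv.conjTranspose_mul_mul_same H

variable {H}

theorem mul_rowSpaceProj_mul_conjTranspose (hH : IsUnit (H * Hᴴ).det) :
    H * rowSpaceProj H * Hᴴ = H * Hᴴ := by
  simp only [rowSpaceProj, ← Matrix.mul_assoc]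
  rw [mul_nonsing_inv _ hH, Matrix.one_mul]

theorem isIdempotentElem_rowSpaceProj (hH : IsUnit (H * Hᴴ).det) :
    IsIdempotentElem (rowSpaceProj H) := by
  simp only [IsIdempotentElem, rowSpaceProj, ← Matrix.mul_assoc]
  rw [Matrix.mul_assoc _ H Hᴴ, Matrix.mul_assoc _ (H * Hᴴ), mul_nonsing_inv _ hH, Matrix.mul_one]

theorem trace_rowSpaceProj (hH : IsUnit (H * Hᴴ).det) :
    (rowSpaceProj H).trace = Fintype.card m := by
  rw [rowSpaceProj, trace_mul_cycle, mul_nonsing_inv _ hH, trace_one]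

theorem re_trace_rowSpaceProj_mul_le [DecidableEq n] (hH : IsUnit (H * Hᴴ).det)
    {C : Matrix n n 𝕜} (hC : C.PosSemidef) :
    RCLike.re (rowSpaceProj H * C).trace ≤ RCLike.re C.trace := by
  have h := isHermitian_one.sub (posSemidef_rowSpaceProj H).1
    |>.trace_mul_nonneg_of_isIdempotentElem (isIdempotentElem_rowSpaceProj hH).one_sub hC
  rw [Matrix.sub_mul, Matrix.one_mul, trace_sub, sub_nonneg] at h
  exact RCLike.re_le_re h

theorem re_det_one_add_mul_mul_conjTranspose_le [DecidableEq n] (hH : (H * Hᴴ).PosDef)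
    {C : Matrix n n 𝕜} (hC : C.PosSemidef) {P : ℝ} (hCP : RCLike.re C.trace ≤ P) :
    RCLike.re (1 + H * C * Hᴴ).det ≤
      RCLike.re (H * Hᴴ).det *
        ((RCLike.re (H * Hᴴ)⁻¹.trace + P) / Fintype.card m) ^ Fintype.card m := by
  have hX := (PosDef.one.add_posSemidef (hC.mul_mul_conjTranspose_same H)).posSemidef
  refine hX.re_det_le_of_re_trace_inv_mul_le hH ?_
  have htrace : ((H * Hᴴ)⁻¹ * (1 + H * C * Hᴴ)).trace =
      (H * Hᴴ)⁻¹.trace + (rowSpaceProj H * C).trace := by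
    simp only [Matrix.mul_add, Matrix.mul_one, trace_add, rowSpaceProj, Matrix.mul_assoc]
    rw [trace_mul_comm Hᴴ]
    simp only [Matrix.mul_assoc]
  rw [htrace, map_add]
  have hHdet := (isUnit_iff_isUnit_det _).mp hH.isUnit
  linarith [re_trace_rowSpaceProj_mul_le hHdet hC]

end rowSpaceProj

end Matrix

section Capacity

variable {m n : Type*} [Fintype m] [Fintype n] [DecidableEq m] [DecidableEq n]

def mimoRates (H : Matrix m n ℂ) (P : ℝ) : Set ℝ :=
  {r : ℝ | ∃ Cx : Matrix n n ℂ, Cx.PosSemidef ∧ Cx.trace.re ≤ P ∧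
    r = Real.log ((1 + H * Cx * Hᴴ).det.re)}

noncomputable def mimoCapacity (H : Matrix m n ℂ) (P : ℝ) : ℝ := sSup (mimoRates H P)

variable {H : Matrix m n ℂ} {P : ℝ}

theorem le_of_mem_mimoRates (hH : (H * Hᴴ).PosDef) {r : ℝ} (hr : r ∈ mimoRates H P) :
    r ≤ Real.log ((H * Hᴴ).det.re *
      (((H * Hᴴ)⁻¹.trace.re + P) / Fintype.card m) ^ Fintype.card m) := by
  obtain ⟨Cx, hCx, hCxP, rfl⟩ := hr
  have hpos := (RCLike.pos_iff.mp (PosDef.one.add_posSemidef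
    (hCx.mul_mul_conjTranspose_same H)).det_pos).1
  exact Real.log_le_log hpos (re_det_one_add_mul_mul_conjTranspose_le hH hCx hCxP)

theorem mimoCapacity_le (hH : (H * Hᴴ).PosDef) (hP : 0 ≤ P) :
    mimoCapacity H P ≤ Real.log ((H * Hᴴ).det.re *
      (((H * Hᴴ)⁻¹.trace.re + P) / Fintype.card m) ^ Fintype.card m) :=
  csSup_le ⟨_, 0, .zero, by simpa using hP, rfl⟩ fun _ ↦ le_of_mem_mimoRates hH

theorem le_mimoCapacity (hH : (H * Hᴴ).PosDef) (hP : 0 < P) :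
    Real.log ((H * Hᴴ).det.re * (P / Fintype.card m) ^ Fintype.card m) ≤ mimoCapacity H P := by
  set q := P / Fintype.card m
  have hq : 0 ≤ q := by positivity
  obtain ⟨hq_pow_pos, hqP⟩ : 0 < q ^ Fintype.card m ∧ q * Fintype.card m ≤ P := by
    rcases (Fintype.card m).eq_zero_or_pos with h | h
    · simp [h, hP.le]
    · have h' : (0 : ℝ) < Fintype.card m := by exact_mod_cast h
      exact ⟨by positivity, (div_mul_cancel₀ _ h'.ne').le⟩
  have hHdet := (isUnit_iff_isUnit_det _).mp hH.isUnit
  have hCx := (posSemidef_rowSpaceProj H).smul (Complex.zero_le_real.mpr hq)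
  have hCxP : ((q : ℂ) • rowSpaceProj H).trace.re ≤ P := by
    simpa [trace_rowSpaceProj hHdet] using hqP
  have hdet : 1 + H * ((q : ℂ) • rowSpaceProj H) * Hᴴ = 1 + (q : ℂ) • (H * Hᴴ) := by
    rw [Matrix.mul_smul, Matrix.smul_mul, mul_rowSpaceProj_mul_conjTranspose hHdet]
  have hlow : q ^ Fintype.card m * (H * Hᴴ).det.re ≤ (1 + (q : ℂ) • (H * Hᴴ)).det.re :=
    hH.posSemidef.pow_mul_re_det_le_re_det_one_add_smul hq
  refine (Real.log_le_log ?_ ?_).trans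
    (le_csSup ⟨_, fun _ ↦ le_of_mem_mimoRates hH⟩ ⟨_, hCx, hCxP, rfl⟩)
  · exact mul_pos (RCLike.pos_iff.mp hH.det_pos).1 hq_pow_pos
  · rwa [hdet, mul_comm]

end Capacity

theorem mimo_capacity_high_snr_general
    {Nr Nt : ℕ}
    (H : Matrix (Fin Nr) (Fin Nt) ℂ)
    (hdet : (H * Hᴴ).det = 1) :
    Tendsto
      (fun P : ℝ =>
        sSup {r : ℝ | ∃ Cx : Matrix (Fin Nt) (Fin Nt) ℂ,
          Cx.PosSemidef ∧ Cx.trace.re ≤ P ∧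
          r = Real.log ((1 + H * Cx * Hᴴ).det.re)}
        - Nr * Real.log (P / Nr)) atTop (nhds 0) := by
  change Tendsto (fun P ↦ mimoCapacity H P - Nr * Real.log (P / Nr)) atTop (nhds 0)
  have hH : (H * Hᴴ).PosDef :=
    (posSemidef_self_mul_conjTranspose H).posDef_iff_det_ne_zero.mpr (hdet ▸ one_ne_zero)
  set c := (H * Hᴴ)⁻¹.trace.re
  have hc : 0 ≤ c := (RCLike.nonneg_iff.mp hH.inv.posSemidef.trace_nonneg).1
  have hlow : ∀ P > 0, 0 ≤ mimoCapacity H P - Nr * Real.log (P / Nr) := fun P hP ↦ by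
    have h := le_mimoCapacity hH hP
    rwa [hdet, Complex.one_re, one_mul, Real.log_pow, Fintype.card_fin, ← sub_nonneg] at h
  have hup : ∀ P > 0, mimoCapacity H P - Nr * Real.log (P / Nr) ≤ Nr * c / P := fun P hP ↦ by
    have h := mimoCapacity_le hH hP.le
    rw [hdet, Complex.one_re, one_mul, Real.log_pow, Fintype.card_fin] at h
    have h' := mul_le_mul_of_nonneg_left (Real.log_add_div_le_log_div_add hP hc Nr)
      (Nat.cast_nonneg Nr)
    rw [mul_add, ← mul_div_assoc] at h'
    linarith
  exact tendsto_of_tendsto_of_tendsto_of_le_of_le' tendsto_const_nhds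
    (tendsto_const_nhds.div_atTop tendsto_id) ((eventually_gt_atTop 0).mono hlow)
    ((eventually_gt_atTop 0).mono hup)

/-- High-SNR asymptotics of the MIMO point-to-point capacity: with `det (H Hᴴ) = 1`,
`C(P) − N_r log(P/N_r) → 0` as `P → ∞`, where
`C(P) = sup { log det(I + H C_x Hᴴ) : C_x ⪰ 0, tr C_x ≤ P }`. -/
theorem mimo_capacity_high_snr
    {Nr Nt : ℕ} (h : Nr ≤ Nt)
    (H : Matrix (Fin Nr) (Fin Nt) ℂ)
    (hr : H.rank = Nr)
    (hdet : (H * Hᴴ).det = 1) :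
    Tendsto
      (fun P : ℝ =>
        sSup {r : ℝ | ∃ Cx : Matrix (Fin Nt) (Fin Nt) ℂ,
          Cx.PosSemidef ∧ Cx.trace.re ≤ P ∧
          r = Real.log ((1 + H * Cx * Hᴴ).det.re)}
        - Nr * Real.log (P / Nr)) atTop (nhds 0) :=
  mimo_capacity_high_snr_general H hdet
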